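/- Assume L_x and L_y are symmetric and that 𝒜 is positive definite, i.e., trace(Wᵀ 𝒜(W)) > 0 for every nonzero real n_Y×n_X matrix W. Let v be a real n_X-vector with ‖v‖₂ = 1, let R be a real n_Y×n_X matrix, and let Â = λ((vᵀ L_x² v) I_{n_Y} + 2 (vᵀ L_x v) L_y + L_y²) + Σ_{α=1}^{n_inj} (vᵀ X_α X_αᵀ v) diag(Ω_α). Then a vector û ∈ ℝ^{n_Y} minimizes the functional f(u) = trace((u vᵀ)ᵀ 𝒜(u vᵀ)) − 2 uᵀ R v if and only if Â û = R v, and this minimizer is unique. -/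

import Mathlib

/-!
On a rank-one matrix `W = u vᵀ` with `vᵀv = 1` every term of `𝒜` factors, giving
`trace(Wᵀ 𝒜(W)) = uᵀ Â u`; so `f(u) = uᵀ Â u - 2 uᵀ R v`, and `Â` is symmetric and, by the
positivity of `𝒜` on rank-one matrices, positive definite. Completing the square around the
unique solution `w` of `Â w = R v` gives `f(u) = f(w) + (u - w)ᵀ Â (u - w)`.
-/

open Matrix

/-- The operator `𝒜(W) = λ(W L_x² + 2 L_y W L_x + L_y² W) + Σ_α diag(Ω_α) W X_α X_αᵀ`. -/
noncomputable def opA {nY nX ninj : ℕ} (lam : ℝ)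
    (Lx : Matrix (Fin nX) (Fin nX) ℝ) (Ly : Matrix (Fin nY) (Fin nY) ℝ)
    (X : Matrix (Fin nX) (Fin ninj) ℝ) (Om : Matrix (Fin nY) (Fin ninj) ℝ)
    (W : Matrix (Fin nY) (Fin nX) ℝ) : Matrix (Fin nY) (Fin nX) ℝ :=
  lam • (W * Lx ^ 2 + (2 : ℝ) • (Ly * W * Lx) + Ly ^ 2 * W) +
    ∑ α : Fin ninj,
      Matrix.diagonal (fun i => Om i α) * W *
        Matrix.vecMulVec (fun k => X k α) (fun k => X k α)

section QuadraticObjective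

def quadraticObjective {n : Type*} [Fintype n] (A : Matrix n n ℝ) (b : n → ℝ) (u : n → ℝ) : ℝ :=
  u ⬝ᵥ A *ᵥ u - 2 * (u ⬝ᵥ b)

variable {n : Type*} [Fintype n] {A : Matrix n n ℝ} (b : n → ℝ)

theorem quadraticObjective_eq_add_of_mulVec_eq (hA : A.IsSymm) {w : n → ℝ} (hw : A *ᵥ w = b)
    (u : n → ℝ) :
    quadraticObjective A b u = quadraticObjective A b w + (u - w) ⬝ᵥ A *ᵥ (u - w) := by
  have hsymm : u ⬝ᵥ A *ᵥ w = w ⬝ᵥ A *ᵥ u := by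
    rw [dotProduct_mulVec, ← mulVec_transpose, hA.eq, dotProduct_comm]
  simp only [quadraticObjective, mulVec_sub, dotProduct_sub, sub_dotProduct, hsymm]
  rw [← hsymm, hw, dotProduct_comm w b]
  ring

variable [DecidableEq n]

theorem Matrix.PosDef.mulVec_bijective (hA : A.PosDef) : Function.Bijective A.mulVec :=
  ⟨mulVec_injective_iff_isUnit.2 hA.isUnit, mulVec_surjective_iff_isUnit.2 hA.isUnit⟩

theorem Matrix.PosDef.forall_quadraticObjective_le_iff (hA : A.PosDef) (w : n → ℝ) :
    (∀ u, quadraticObjective A b w ≤ quadraticObjective A b u) ↔ A *ᵥ w = b := by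
  have hsymm : A.IsSymm := by simpa [conjTranspose_eq_transpose_of_trivial] using hA.isHermitian
  refine ⟨fun hmin => ?_, fun hw u => ?_⟩
  · obtain ⟨w₀, hw₀⟩ := hA.mulVec_bijective.2 b
    have hle : (w - w₀) ⬝ᵥ A *ᵥ (w - w₀) ≤ 0 := by
      have := hmin w₀
      rw [quadraticObjective_eq_add_of_mulVec_eq b hsymm hw₀ w] at this
      linarith
    have hw : w = w₀ := by
      by_contra hne
      exact hle.not_gt (by simpa using hA.dotProduct_mulVec_pos (sub_ne_zero.2 hne))
    rwa [hw]
  · rw [quadraticObjective_eq_add_of_mulVec_eq b hsymm hw u, le_add_iff_nonneg_right]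
    simpa using hA.posSemidef.dotProduct_mulVec_nonneg (u - w)

theorem Matrix.PosDef.existsUnique_isMin_quadraticObjective (hA : A.PosDef) :
    ∃! w, ∀ u, quadraticObjective A b w ≤ quadraticObjective A b u := by
  simpa only [hA.forall_quadraticObjective_le_iff] using hA.mulVec_bijective.existsUnique b

end QuadraticObjective

theorem trace_transpose_vecMulVec_mul {m n R : Type*} [Fintype m] [Fintype n] [CommSemiring R]
    (u : m → R) (v : n → R) (M : Matrix m n R) :
    trace ((vecMulVec u v)ᵀ * M) = u ⬝ᵥ M *ᵥ v := by
  rw [transpose_vecMulVec, trace_mul_comm, mul_vecMulVec, trace_vecMulVec, dotProduct_comm]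

theorem trace_transpose_vecMulVec_mul_mul {m n R : Type*} [Fintype m] [Fintype n] [CommSemiring R]
    (u : m → R) (v : n → R) (P : Matrix m m R) (Q : Matrix n n R) :
    trace ((vecMulVec u v)ᵀ * (P * vecMulVec u v * Q)) = (v ⬝ᵥ Q *ᵥ v) * (u ⬝ᵥ P *ᵥ u) := by
  rw [trace_transpose_vecMulVec_mul, ← mulVec_mulVec, ← mulVec_mulVec, vecMulVec_mulVec]
  simp [mulVec_smul, dotProduct_smul]

theorem vecMulVec_ne_zero_of_ne_zero {m n α : Type*} [Mul α] [Zero α] [NoZeroDivisors α]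
    {a : m → α} {b : n → α} (ha : a ≠ 0) (hb : b ≠ 0) : vecMulVec a b ≠ 0 := fun h => by
  obtain ⟨i, hi⟩ := Function.ne_iff.mp ha
  obtain ⟨j, hj⟩ := Function.ne_iff.mp hb
  exact mul_ne_zero hi hj (congrFun (congrFun h i) j)

theorem dotProduct_self_eq_norm_sq {ι : Type*} [Fintype ι] (v : ι → ℝ) :
    v ⬝ᵥ v = ‖(EuclideanSpace.equiv ι ℝ).symm v‖ ^ 2 := by
  rw [EuclideanSpace.real_norm_sq_eq]
  simp [dotProduct, sq]

noncomputable def opAhat {nY nX ninj : ℕ} (lam : ℝ)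
    (Lx : Matrix (Fin nX) (Fin nX) ℝ) (Ly : Matrix (Fin nY) (Fin nY) ℝ)
    (X : Matrix (Fin nX) (Fin ninj) ℝ) (Om : Matrix (Fin nY) (Fin ninj) ℝ)
    (v : Fin nX → ℝ) : Matrix (Fin nY) (Fin nY) ℝ :=
  lam • ((v ⬝ᵥ (Lx ^ 2).mulVec v) • (1 : Matrix (Fin nY) (Fin nY) ℝ) +
      (2 * (v ⬝ᵥ Lx.mulVec v)) • Ly + Ly ^ 2) +
    ∑ α : Fin ninj,
      (v ⬝ᵥ (Matrix.vecMulVec (fun k => X k α) (fun k => X k α)).mulVec v) •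
        Matrix.diagonal (fun i => Om i α)

section RankOne

variable {nY nX ninj : ℕ} (lam : ℝ) (Lx : Matrix (Fin nX) (Fin nX) ℝ)
  (Ly : Matrix (Fin nY) (Fin nY) ℝ) (X : Matrix (Fin nX) (Fin ninj) ℝ)
  (Om : Matrix (Fin nY) (Fin ninj) ℝ) {v : Fin nX → ℝ}

theorem trace_transpose_mul_opA_vecMulVec (hv : v ⬝ᵥ v = 1) (u : Fin nY → ℝ) :
    trace ((vecMulVec u v)ᵀ * opA lam Lx Ly X Om (vecMulVec u v)) =
      u ⬝ᵥ opAhat lam Lx Ly X Om v *ᵥ u := by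
  have hmid := trace_transpose_vecMulVec_mul_mul u v
  have hright := hmid 1 (Lx ^ 2)
  have hleft := hmid (Ly ^ 2) 1
  rw [Matrix.one_mul] at hright
  rw [Matrix.mul_one] at hleft
  simp only [opA, opAhat, Matrix.mul_add, Matrix.mul_smul, Matrix.mul_sum, trace_add, trace_smul,
    trace_sum, hmid, hleft, hright, add_mulVec, smul_mulVec, one_mulVec, sum_mulVec,
    dotProduct_add, dotProduct_smul, dotProduct_sum, hv, smul_eq_mul]
  ring

theorem opAhat_posDef (hLy : Lyᵀ = Ly)
    (hpd : ∀ W : Matrix (Fin nY) (Fin nX) ℝ, W ≠ 0 →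
      0 < Matrix.trace (Wᵀ * opA lam Lx Ly X Om W))
    (hv : v ⬝ᵥ v = 1) : (opAhat lam Lx Ly X Om v).PosDef := by
  refine .of_dotProduct_mulVec_pos ?_ fun u hu => ?_
  · simp [IsHermitian, conjTranspose_eq_transpose_of_trivial, opAhat, transpose_sum,
      transpose_pow, hLy]
  · have hv0 : v ≠ 0 := by rintro rfl; simp at hv
    rw [star_trivial, ← trace_transpose_mul_opA_vecMulVec lam Lx Ly X Om hv]
    exact hpd _ (vecMulVec_ne_zero_of_ne_zero hu hv0)

end RankOne

theorem ALS_half_step_minimizer_general {nY nX ninj : ℕ} (lam : ℝ)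
    (Lx : Matrix (Fin nX) (Fin nX) ℝ)
    (Ly : Matrix (Fin nY) (Fin nY) ℝ) (hLy : Lyᵀ = Ly)
    (X : Matrix (Fin nX) (Fin ninj) ℝ) (Om : Matrix (Fin nY) (Fin ninj) ℝ)
    (hpd : ∀ W : Matrix (Fin nY) (Fin nX) ℝ, W ≠ 0 →
      0 < Matrix.trace (Wᵀ * opA lam Lx Ly X Om W))
    (v : Fin nX → ℝ) (hv : ‖(EuclideanSpace.equiv (Fin nX) ℝ).symm v‖ = 1)
    (R : Matrix (Fin nY) (Fin nX) ℝ)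
    (Ahat : Matrix (Fin nY) (Fin nY) ℝ)
    (hAhat : Ahat =
      lam • ((v ⬝ᵥ (Lx ^ 2).mulVec v) • (1 : Matrix (Fin nY) (Fin nY) ℝ) +
          (2 * (v ⬝ᵥ Lx.mulVec v)) • Ly + Ly ^ 2) +
        ∑ α : Fin ninj,
          (v ⬝ᵥ (Matrix.vecMulVec (fun k => X k α) (fun k => X k α)).mulVec v) •
            Matrix.diagonal (fun i => Om i α))
    (f : (Fin nY → ℝ) → ℝ)
    (hf : f = fun u =>
      Matrix.trace ((Matrix.vecMulVec u v)ᵀ *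
        opA lam Lx Ly X Om (Matrix.vecMulVec u v)) - 2 * (u ⬝ᵥ R.mulVec v))
    (uhat : Fin nY → ℝ) :
    ((∀ u : Fin nY → ℝ, f uhat ≤ f u) ↔ Ahat.mulVec uhat = R.mulVec v) ∧
      (∃! u₀ : Fin nY → ℝ, ∀ u : Fin nY → ℝ, f u₀ ≤ f u) := by
  have hvv : v ⬝ᵥ v = 1 := by rw [dotProduct_self_eq_norm_sq, hv, one_pow]
  have hA : Ahat.PosDef := hAhat ▸ opAhat_posDef lam Lx Ly X Om hLy hpd hvv
  have hfq : f = quadraticObjective Ahat (R *ᵥ v) := by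
    subst hf hAhat
    funext u
    exact congrArg (· - 2 * (u ⬝ᵥ R *ᵥ v))
      (trace_transpose_mul_opA_vecMulVec lam Lx Ly X Om hvv u)
  subst hfq
  exact ⟨hA.forall_quadraticObjective_le_iff _ uhat, hA.existsUnique_isMin_quadraticObjective _⟩

/-- With `L_x, L_y` symmetric, `𝒜` positive definite and `‖v‖₂ = 1`, a vector `û`
minimizes `f(u) = trace((u vᵀ)ᵀ 𝒜(u vᵀ)) − 2 uᵀ R v` iff `Â û = R v`, where
`Â = λ((vᵀL_x²v) I + 2(vᵀL_x v) L_y + L_y²) + Σ_α (vᵀX_αX_αᵀv) diag(Ω_α)`;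
moreover the minimizer is unique. -/
theorem ALS_half_step_minimizer {nY nX ninj : ℕ} (lam : ℝ)
    (Lx : Matrix (Fin nX) (Fin nX) ℝ) (hLx : Lxᵀ = Lx)
    (Ly : Matrix (Fin nY) (Fin nY) ℝ) (hLy : Lyᵀ = Ly)
    (X : Matrix (Fin nX) (Fin ninj) ℝ) (Om : Matrix (Fin nY) (Fin ninj) ℝ)
    (hpd : ∀ W : Matrix (Fin nY) (Fin nX) ℝ, W ≠ 0 →
      0 < Matrix.trace (Wᵀ * opA lam Lx Ly X Om W))
    (v : Fin nX → ℝ) (hv : ‖(EuclideanSpace.equiv (Fin nX) ℝ).symm v‖ = 1)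
    (R : Matrix (Fin nY) (Fin nX) ℝ)
    (Ahat : Matrix (Fin nY) (Fin nY) ℝ)
    (hAhat : Ahat =
      lam • ((v ⬝ᵥ (Lx ^ 2).mulVec v) • (1 : Matrix (Fin nY) (Fin nY) ℝ) +
          (2 * (v ⬝ᵥ Lx.mulVec v)) • Ly + Ly ^ 2) +
        ∑ α : Fin ninj,
          (v ⬝ᵥ (Matrix.vecMulVec (fun k => X k α) (fun k => X k α)).mulVec v) •
            Matrix.diagonal (fun i => Om i α))
    (f : (Fin nY → ℝ) → ℝ)
    (hf : f = fun u =>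
      Matrix.trace ((Matrix.vecMulVec u v)ᵀ *
        opA lam Lx Ly X Om (Matrix.vecMulVec u v)) - 2 * (u ⬝ᵥ R.mulVec v))
    (uhat : Fin nY → ℝ) :
    ((∀ u : Fin nY → ℝ, f uhat ≤ f u) ↔ Ahat.mulVec uhat = R.mulVec v) ∧
      (∃! u₀ : Fin nY → ℝ, ∀ u : Fin nY → ℝ, f u₀ ≤ f u) :=
  ALS_half_step_minimizer_general lam Lx Ly hLy X Om hpd v hv R Ahat hAhat f hf uhat
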